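/- arXiv:1912.06925 — 10 statements merged into one kernel-verified Lean document; each statement's English description precedes it below -/
import Mathlib

section
/- Let A be a non-degenerate n-dimensional evolution algebra with natural basis B, and let d be a derivation with matrix (d_{ij}). If i ≠ j and D^1(i) ∩ D^1(j) = ∅, then d_{ij} = d_{ji} = 0. -/
theorem derivation_entry_eq_zero_of_apply_eq_zero_of_apply_ne_zero {K ι : Type*} [Semiring K]
    [NoZeroDivisors K] (ω d : Matrix ι ι K)
    (hd1 : ∀ i j k : ι, i ≠ j → ω j k * d i j + ω i k * d j i = 0)
    {i j k : ι} (hij : i ≠ j) (hik : ω i k = 0) (hjk : ω j k ≠ 0) : d i j = 0 := by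
  simpa [hik, hjk] using hd1 i j k hij

theorem derivation_disjoint_descendants_zero_general {K : Type*} [Field K] {n : ℕ}
    (ω d : Matrix (Fin n) (Fin n) K)
    (hnd : ∀ i : Fin n, ∃ k, ω i k ≠ 0)
    (hd1 : ∀ i j k : Fin n, i ≠ j → ω j k * d i j + ω i k * d j i = 0)
    (i j : Fin n) (hij : i ≠ j)
    (hdisj : {k | ω i k ≠ 0} ∩ {k | ω j k ≠ 0} = ∅) :
    d i j = 0 ∧ d j i = 0 := by
  have hdisj' := Set.disjoint_iff_inter_eq_empty.mpr hdisj
  obtain ⟨k, hik⟩ := hnd i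
  obtain ⟨l, hjl⟩ := hnd j
  have hjk : ω j k = 0 := not_not.mp (Set.disjoint_left.mp hdisj' hik)
  have hil : ω i l = 0 := not_not.mp (Set.disjoint_right.mp hdisj' hjl)
  exact ⟨derivation_entry_eq_zero_of_apply_eq_zero_of_apply_ne_zero ω d hd1 hij hil hjl,
    derivation_entry_eq_zero_of_apply_eq_zero_of_apply_ne_zero ω d hd1 hij.symm hjk hik⟩

/-- Non-degenerate case: if `i ≠ j` and `D¹(i) ∩ D¹(j) = ∅`, then `d_{ij} = d_{ji} = 0`. -/
theorem derivation_disjoint_descendants_zero {K : Type*} [Field K] {n : ℕ}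
    (ω d : Matrix (Fin n) (Fin n) K)
    (hnd : ∀ i : Fin n, ∃ k, ω i k ≠ 0)
    (hd1 : ∀ i j k : Fin n, i ≠ j → ω j k * d i j + ω i k * d j i = 0)
    (hd2 : ∀ i j : Fin n, ∑ k, ω i k * d k j = 2 * ω i j * d i i)
    (i j : Fin n) (hij : i ≠ j)
    (hdisj : {k | ω i k ≠ 0} ∩ {k | ω j k ≠ 0} = ∅) :
    d i j = 0 ∧ d j i = 0 :=
  derivation_disjoint_descendants_zero_general ω d hnd hd1 i j hij hdisj
end

section
/- Let A be a non-degenerate n-dimensional evolution algebra (over a field of characteristic 0) with natural basis B and structure matrix (ω_{ij}), and let d be a derivation with matrix (d_{ij}). If d_{ij} = 0 for all i ≠ j, then d_{ii} = 0 for all i, i.e., d = 0. -/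
/-! For a diagonal derivation, an arrow `i → j` forces `d j j = 2 * d i i`. As no vertex is a
sink, arrows can be followed from `i` forever; in a finite graph some vertex recurs, which gives
`2 ^ a * d i i = 2 ^ b * d i i` with `a ≠ b`, hence `d i i = 0` in characteristic zero. -/

open Matrix

theorem eq_zero_of_forall_exists_eq_two_mul {ι K : Type*} [Finite ι] [Field K] [CharZero K]
    (f : ι → K) (h : ∀ i, ∃ j, f j = 2 * f i) : f = 0 := by
  choose s hs using h
  funext i
  have hiter : ∀ m : ℕ, f (s^[m] i) = 2 ^ m * f i := by
    intro m
    induction m with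
    | zero => simp
    | succ m ih => rw [Function.iterate_succ_apply', hs, ih, pow_succ]; ring
  obtain ⟨a, b, hab, hrec⟩ := Finite.exists_ne_map_eq_of_infinite fun m : ℕ => s^[m] i
  have hpow : (2 : K) ^ a ≠ 2 ^ b := by
    exact_mod_cast (Nat.pow_right_injective le_rfl).ne hab
  have h2 : (2 : K) ^ a * f i = 2 ^ b * f i := by rw [← hiter, ← hiter, hrec]
  exact (mul_eq_mul_right_iff.mp h2).resolve_left hpow

theorem Matrix.IsDiag.apply_self_eq_two_mul {ι K : Type*} [Fintype ι] [Field K]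
    {ω d : Matrix ι ι K} (hd : d.IsDiag)
    (hder : ∀ i j, ∑ k, ω i k * d k j = 2 * ω i j * d i i) {i j : ι} (hij : ω i j ≠ 0) :
    d j j = 2 * d i i := by
  have hsum : ∑ k, ω i k * d k j = ω i j * d j j :=
    Finset.sum_eq_single_of_mem j (Finset.mem_univ j) fun k _ hk => by rw [hd hk, mul_zero]
  have h := hder i j
  rw [hsum, mul_assoc, mul_left_comm] at h
  exact mul_left_cancel₀ hij h

theorem derivation_diag_zero_general {K : Type*} [Field K] [CharZero K] {n : ℕ}
    (ω d : Matrix (Fin n) (Fin n) K)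
    (hnd : ∀ i : Fin n, ∃ k, ω i k ≠ 0)
    (hd2 : ∀ i j : Fin n, ∑ k, ω i k * d k j = 2 * ω i j * d i i)
    (hoff : ∀ i j : Fin n, i ≠ j → d i j = 0) :
    d = 0 := by
  have hd : d.IsDiag := fun i j hij => hoff i j hij
  have hdiag : d.diag = 0 := eq_zero_of_forall_exists_eq_two_mul d.diag fun i =>
    let ⟨j, hij⟩ := hnd i
    ⟨j, hd.apply_self_eq_two_mul hd2 hij⟩
  rw [← hd.diagonal_diag, hdiag]
  exact diagonal_zero

/-- Non-degenerate, characteristic zero: if all off-diagonal entries of the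
derivation matrix vanish, then the diagonal entries vanish as well, i.e. `d = 0`. -/
theorem derivation_diag_zero {K : Type*} [Field K] [CharZero K] {n : ℕ}
    (ω d : Matrix (Fin n) (Fin n) K)
    (hnd : ∀ i : Fin n, ∃ k, ω i k ≠ 0)
    (hd1 : ∀ i j k : Fin n, i ≠ j → ω j k * d i j + ω i k * d j i = 0)
    (hd2 : ∀ i j : Fin n, ∑ k, ω i k * d k j = 2 * ω i j * d i i)
    (hoff : ∀ i j : Fin n, i ≠ j → d i j = 0) :
    d = 0 :=
  derivation_diag_zero_general ω d hnd hd2 hoff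
end

section
/- Let A be a non-degenerate n-dimensional evolution algebra with natural basis B, and let d be a derivation with matrix (d_{ij}). If d_{ij} ≠ 0 for some i ≠ j, then i and j are twins relative to B, i.e., D^1(i) = D^1(j). -/
/-! Non-degeneracy of `e_j` forces `d_{ji} ≠ 0`; with `d_{ij}` and `d_{ji}` both nonzero, the derivation
identity `ω_{jk} d_{ij} + ω_{ik} d_{ji} = 0` makes `ω_{ik}` and `ω_{jk}` vanish together. -/

section MulAddMul

variable {R : Type*} [NonUnitalNonAssocSemiring R] [NoZeroDivisors R] {a b x y : R}

theorem ne_zero_and_ne_zero_of_mul_add_mul_eq_zero (h : a * x + b * y = 0) (ha : a ≠ 0)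
    (hx : x ≠ 0) : b ≠ 0 ∧ y ≠ 0 := by
  have hby : b * y ≠ 0 := fun hby => mul_ne_zero ha hx (by rwa [hby, add_zero] at h)
  exact ⟨left_ne_zero_of_mul hby, right_ne_zero_of_mul hby⟩

theorem ne_zero_iff_ne_zero_of_mul_add_mul_eq_zero (h : a * x + b * y = 0) (hx : x ≠ 0)
    (hy : y ≠ 0) : a ≠ 0 ↔ b ≠ 0 :=
  ⟨fun ha => (ne_zero_and_ne_zero_of_mul_add_mul_eq_zero h ha hx).1,
    fun hb => (ne_zero_and_ne_zero_of_mul_add_mul_eq_zero ((add_comm _ _).trans h) hb hy).1⟩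

end MulAddMul

theorem derivation_nonzero_implies_twins_general {K : Type*} [Field K] {n : ℕ}
    (ω d : Matrix (Fin n) (Fin n) K)
    (hnd : ∀ i : Fin n, ∃ k, ω i k ≠ 0)
    (hd1 : ∀ i j k : Fin n, i ≠ j → ω j k * d i j + ω i k * d j i = 0)
    (i j : Fin n) (hij : i ≠ j) (hdij : d i j ≠ 0) :
    {k | ω i k ≠ 0} = {k | ω j k ≠ 0} := by
  obtain ⟨k₀, hk₀⟩ := hnd j
  have hdji : d j i ≠ 0 := (ne_zero_and_ne_zero_of_mul_add_mul_eq_zero (hd1 i j k₀ hij) hk₀ hdij).2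
  exact Set.ext fun k => (ne_zero_iff_ne_zero_of_mul_add_mul_eq_zero (hd1 i j k hij) hdij hdji).symm

/-- Non-degenerate case: if `d_{ij} ≠ 0` for some `i ≠ j`, then `i` and `j`
are twins relative to `B`, i.e. `D¹(i) = D¹(j)`. -/
theorem derivation_nonzero_implies_twins {K : Type*} [Field K] {n : ℕ}
    (ω d : Matrix (Fin n) (Fin n) K)
    (hnd : ∀ i : Fin n, ∃ k, ω i k ≠ 0)
    (hd1 : ∀ i j k : Fin n, i ≠ j → ω j k * d i j + ω i k * d j i = 0)
    (hd2 : ∀ i j : Fin n, ∑ k, ω i k * d k j = 2 * ω i j * d i i)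
    (i j : Fin n) (hij : i ≠ j) (hdij : d i j ≠ 0) :
    {k | ω i k ≠ 0} = {k | ω j k ≠ 0} :=
  derivation_nonzero_implies_twins_general ω d hnd hd1 i j hij hdij
end

section
/- Let A be an irreducible non-degenerate n-dimensional evolution algebra over a field of characteristic 0 with natural basis B. If A is twin-free relative to B (i.e., D^1(i) ≠ D^1(j) for all i ≠ j), then every derivation of A is zero. -/
/-!
The derivation equations `ω j k d i j + ω i k d j i = 0` for `i ≠ j` show that if `d i j ≠ 0`
then also `d j i ≠ 0` (non-degeneracy) and rows `i` and `j` of `ω` have the same support,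
which twin-freeness forbids; so `d` is diagonal. The remaining equations then read
`d j j = 2 d i i` whenever `ω i j ≠ 0`. Following an arrow out of every vertex produces an
orbit on which the diagonal entry doubles at each step; the orbit is eventually periodic,
so `2 ^ a d i i = 2 ^ b d i i` with `a ≠ b`, and `d i i = 0` in characteristic zero.
-/

open Function

section OffDiagonal

variable {ι K : Type*} [NonUnitalNonAssocSemiring K] [NoZeroDivisors K] {ω d : Matrix ι ι K} {i j : ι}

theorem Matrix.derivation_apply_swap_ne_zero (hnd : ∀ i, ∃ k, ω i k ≠ 0)
    (hd1 : ∀ i j k, i ≠ j → ω j k * d i j + ω i k * d j i = 0)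
    (hij : i ≠ j) (hdij : d i j ≠ 0) : d j i ≠ 0 := by
  intro hdji
  obtain ⟨k, hjk⟩ := hnd j
  have h := hd1 i j k hij
  rw [hdji, mul_zero, add_zero] at h
  exact mul_ne_zero hjk hdij h

theorem Matrix.support_row_eq_of_derivation
    (hd1 : ∀ i j k, i ≠ j → ω j k * d i j + ω i k * d j i = 0)
    (hij : i ≠ j) (hdij : d i j ≠ 0) (hdji : d j i ≠ 0) :
    {k | ω i k ≠ 0} = {k | ω j k ≠ 0} := by
  ext k
  have h := hd1 i j k hij
  refine ⟨fun hik hjk => ?_, fun hjk hik => ?_⟩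
  · rw [hjk, zero_mul, zero_add] at h
    exact mul_ne_zero hik hdji h
  · rw [hik, zero_mul, add_zero] at h
    exact mul_ne_zero hjk hdij h

theorem Matrix.derivation_offDiag_eq_zero (hnd : ∀ i, ∃ k, ω i k ≠ 0)
    (htf : ∀ i j, i ≠ j → {k | ω i k ≠ 0} ≠ {k | ω j k ≠ 0})
    (hd1 : ∀ i j k, i ≠ j → ω j k * d i j + ω i k * d j i = 0) (hij : i ≠ j) :
    d i j = 0 := by
  by_contra hdij
  exact htf i j hij <| Matrix.support_row_eq_of_derivation hd1 hij hdij
    (Matrix.derivation_apply_swap_ne_zero hnd hd1 hij hdij)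

end OffDiagonal

theorem Matrix.diag_eq_two_mul_of_offDiag_eq_zero {ι K : Type*} [Fintype ι] [CommRing K]
    [IsDomain K] {ω d : Matrix ι ι K} (hoff : ∀ i j, i ≠ j → d i j = 0)
    (hd2 : ∀ i j, ∑ k, ω i k * d k j = 2 * ω i j * d i i) {i j : ι} (hij : ω i j ≠ 0) :
    d j j = 2 * d i i := by
  have hsum : ∑ k, ω i k * d k j = ω i j * d j j :=
    Fintype.sum_eq_single j fun k hk => by rw [hoff k j hk, mul_zero]
  refine mul_left_cancel₀ hij ?_
  rw [← hsum, hd2, mul_assoc, mul_left_comm]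

theorem eq_zero_of_apply_map_eq_two_mul {ι K : Type*} [Finite ι] [CommRing K] [IsDomain K]
    [CharZero K] {f : ι → ι} {g : ι → K} (hg : ∀ k, g (f k) = 2 * g k) (i : ι) : g i = 0 := by
  have horbit : ∀ m : ℕ, g (f^[m] i) = 2 ^ m * g i := by
    intro m
    induction m with
    | zero => simp
    | succ m ih => rw [iterate_succ_apply', hg, ih, pow_succ, mul_comm _ (2 : K), mul_assoc]
  obtain ⟨a, b, hab, heq⟩ := Finite.exists_ne_map_eq_of_infinite fun m : ℕ => f^[m] i
  have hpow : (2 : K) ^ a ≠ 2 ^ b := fun h =>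
    hab <| Nat.pow_right_injective le_rfl (by exact_mod_cast h)
  by_contra hgi
  exact hpow <| mul_right_cancel₀ hgi <| by rw [← horbit, ← horbit, heq]

theorem twin_free_derivation_zero_general {K : Type*} [Field K] [CharZero K] {n : ℕ}
    (ω d : Matrix (Fin n) (Fin n) K)
    (hnd : ∀ i : Fin n, ∃ k, ω i k ≠ 0)
    (htf : ∀ i j : Fin n, i ≠ j → {k | ω i k ≠ 0} ≠ {k | ω j k ≠ 0})
    (hd1 : ∀ i j k : Fin n, i ≠ j → ω j k * d i j + ω i k * d j i = 0)
    (hd2 : ∀ i j : Fin n, ∑ k, ω i k * d k j = 2 * ω i j * d i i) :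
    d = 0 := by
  have hoff : ∀ i j, i ≠ j → d i j = 0 := fun i j =>
    Matrix.derivation_offDiag_eq_zero hnd htf hd1
  choose f hf using hnd
  have hdiag : ∀ i, d i i = 0 := eq_zero_of_apply_map_eq_two_mul (g := fun i => d i i)
    fun k => Matrix.diag_eq_two_mul_of_offDiag_eq_zero hoff hd2 (hf k)
  ext i j
  rcases eq_or_ne i j with rfl | hij
  · exact hdiag i
  · exact hoff i j hij

/-- Main theorem: an irreducible (i.e. connected associated graph) non-degenerate
evolution algebra over a field of characteristic zero that is twin-free relative
to `B` has only the zero derivation. -/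
theorem twin_free_derivation_zero {K : Type*} [Field K] [CharZero K] {n : ℕ}
    (ω d : Matrix (Fin n) (Fin n) K)
    (hnd : ∀ i : Fin n, ∃ k, ω i k ≠ 0)
    (hirr : (SimpleGraph.fromRel (fun i j : Fin n => ω i j ≠ 0)).Connected)
    (htf : ∀ i j : Fin n, i ≠ j → {k | ω i k ≠ 0} ≠ {k | ω j k ≠ 0})
    (hd1 : ∀ i j k : Fin n, i ≠ j → ω j k * d i j + ω i k * d j i = 0)
    (hd2 : ∀ i j : Fin n, ∑ k, ω i k * d k j = 2 * ω i j * d i i) :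
    d = 0 :=
  twin_free_derivation_zero_general ω d hnd htf hd1 hd2
end

section
/- Let A be a non-degenerate n-dimensional evolution algebra with natural basis B, with twin partition {T_1,...,T_k} of the index set Λ relative to B. Then every derivation d of A, viewed as a matrix (d_{ij}), is block diagonal with respect to the twin partition: d_{ij} = 0 whenever i and j belong to different twin classes. -/
/-!
For `i ≠ j` the derivation identity `d(e_i e_j) = 0` reads, coordinatewise,
`ω_{jk} d_{ij} + ω_{ik} d_{ji} = 0`. If `D¹(i) ≠ D¹(j)`, pick `k` in exactly one of them.
If `k ∈ D¹(j) \ D¹(i)`, this identity gives `d_{ij} = 0` at once. If `k ∈ D¹(i) \ D¹(j)`, it gives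
`d_{ji} = 0`, and then the identity at any `k' ∈ D¹(j)` (non-empty by non-degeneracy) gives `d_{ij} = 0`.
-/

theorem exists_xor_ne_zero_of_support_ne {K ι : Type*} [Zero K] {ω : Matrix ι ι K} {i j : ι}
    (h : {k | ω i k ≠ 0} ≠ {k | ω j k ≠ 0}) :
    ∃ k, (ω i k = 0 ∧ ω j k ≠ 0) ∨ (ω i k ≠ 0 ∧ ω j k = 0) := by
  by_contra! hk
  exact h (Set.ext fun k => by by_cases hik : ω i k = 0 <;> simp_all)

section Derivation

variable {K ι : Type*} [NonUnitalNonAssocSemiring K] [NoZeroDivisors K] {ω d : Matrix ι ι K}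

theorem derivation_apply_eq_zero_of_eq_zero_of_ne_zero
    (hd : ∀ i j k, i ≠ j → ω j k * d i j + ω i k * d j i = 0)
    {i j k : ι} (hij : i ≠ j) (hik : ω i k = 0) (hjk : ω j k ≠ 0) : d i j = 0 := by
  have h := hd i j k hij
  rw [hik, zero_mul, add_zero] at h
  exact (mul_eq_zero.mp h).resolve_left hjk

theorem derivation_apply_eq_zero_of_apply_swap_eq_zero
    (hd : ∀ i j k, i ≠ j → ω j k * d i j + ω i k * d j i = 0)
    {i j : ι} (hij : i ≠ j) (hj : ∃ k, ω j k ≠ 0) (hji : d j i = 0) : d i j = 0 := by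
  obtain ⟨k, hjk⟩ := hj
  have h := hd i j k hij
  rw [hji, mul_zero, add_zero] at h
  exact (mul_eq_zero.mp h).resolve_left hjk

end Derivation

theorem derivation_block_diagonal_general {K : Type*} [Field K] {n : ℕ}
    (ω d : Matrix (Fin n) (Fin n) K)
    (hnd : ∀ i : Fin n, ∃ k, ω i k ≠ 0)
    (hd1 : ∀ i j k : Fin n, i ≠ j → ω j k * d i j + ω i k * d j i = 0)
    (i j : Fin n) (hij : {k | ω i k ≠ 0} ≠ {k | ω j k ≠ 0}) :
    d i j = 0 := by
  have hne : i ≠ j := by rintro rfl; exact hij rfl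
  obtain ⟨k, ⟨hik, hjk⟩ | ⟨hik, hjk⟩⟩ := exists_xor_ne_zero_of_support_ne hij
  · exact derivation_apply_eq_zero_of_eq_zero_of_ne_zero hd1 hne hik hjk
  · have hji : d j i = 0 := derivation_apply_eq_zero_of_eq_zero_of_ne_zero hd1 hne.symm hjk hik
    exact derivation_apply_eq_zero_of_apply_swap_eq_zero hd1 hne (hnd j) hji

/-- Any derivation of a non-degenerate evolution algebra is block diagonal with
respect to the twin partition: `d_{ij} = 0` whenever `i` and `j` belong to
different twin classes, i.e. whenever `D¹(i) ≠ D¹(j)`. -/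
theorem derivation_block_diagonal {K : Type*} [Field K] {n : ℕ}
    (ω d : Matrix (Fin n) (Fin n) K)
    (hnd : ∀ i : Fin n, ∃ k, ω i k ≠ 0)
    (hd1 : ∀ i j k : Fin n, i ≠ j → ω j k * d i j + ω i k * d j i = 0)
    (hd2 : ∀ i j : Fin n, ∑ k, ω i k * d k j = 2 * ω i j * d i i)
    (i j : Fin n) (hij : {k | ω i k ≠ 0} ≠ {k | ω j k ≠ 0}) :
    d i j = 0 :=
  derivation_block_diagonal_general ω d hnd hd1 i j hij
end

section
/- Let A be an n-dimensional evolution algebra with natural basis B and structure matrix (ω_{ij}), and let d be a derivation. Suppose i ≠ j and there exist k, ℓ ∈ D^1(i) such that ω_{ik} ω_{jℓ} − ω_{iℓ} ω_{jk} ≠ 0. Then d_{ij} = d_{ji} = 0. -/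
theorem eq_zero_and_eq_zero_of_det_ne_zero {R : Type*} [CommRing R] [NoZeroDivisors R]
    {a b c e x y : R} (h₁ : a * x + b * y = 0) (h₂ : c * x + e * y = 0)
    (hdet : a * e - b * c ≠ 0) : x = 0 ∧ y = 0 := by
  have hx : (a * e - b * c) * x = 0 := by linear_combination e * h₁ - b * h₂
  have hy : (a * e - b * c) * y = 0 := by linear_combination a * h₂ - c * h₁
  exact ⟨(mul_eq_zero.mp hx).resolve_left hdet, (mul_eq_zero.mp hy).resolve_left hdet⟩

theorem derivation_det_zero_general {K : Type*} [Field K] {n : ℕ}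
    (ω d : Matrix (Fin n) (Fin n) K)
    (hd1 : ∀ i j k : Fin n, i ≠ j → ω j k * d i j + ω i k * d j i = 0)
    (i j : Fin n) (hij : i ≠ j) (k l : Fin n)
    (hdet : ω i k * ω j l - ω i l * ω j k ≠ 0) :
    d i j = 0 ∧ d j i = 0 :=
  eq_zero_and_eq_zero_of_det_ne_zero (hd1 i j l hij) (hd1 i j k hij)
    (fun h ↦ hdet (by linear_combination h))

/-- If `i ≠ j` and there exist `k, ℓ ∈ D¹(i)` with
`ω_{ik} ω_{jℓ} − ω_{iℓ} ω_{jk} ≠ 0`, then `d_{ij} = d_{ji} = 0`. -/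
theorem derivation_det_zero {K : Type*} [Field K] {n : ℕ}
    (ω d : Matrix (Fin n) (Fin n) K)
    (hd1 : ∀ i j k : Fin n, i ≠ j → ω j k * d i j + ω i k * d j i = 0)
    (hd2 : ∀ i j : Fin n, ∑ k, ω i k * d k j = 2 * ω i j * d i i)
    (i j : Fin n) (hij : i ≠ j) (k l : Fin n)
    (hk : ω i k ≠ 0) (hl : ω i l ≠ 0)
    (hdet : ω i k * ω j l - ω i l * ω j k ≠ 0) :
    d i j = 0 ∧ d j i = 0 :=
  derivation_det_zero_general ω d hd1 i j hij k l hdet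
end

section
/- Let A be an n-dimensional evolution algebra with natural basis B, let d be a derivation, and let i be an index whose twin class relative to B is the singleton {i}. If i ∈ D^1(i) (i.e., ω_{ii} ≠ 0), then d_{ii} = 0. -/
section

variable {K ι : Type*} [Ring K] [NoZeroDivisors K] {ω d : Matrix ι ι K}

theorem derivation_apply_eq_zero_of_mul_eq_zero
    (hd1 : ∀ i j k : ι, i ≠ j → ω j k * d i j + ω i k * d j i = 0)
    {i k m : ι} (hki : k ≠ i) (hm : ω i m ≠ 0) (h : ω k m * d i k = 0) :
    d k i = 0 := by
  have e := hd1 k i m hki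
  rw [h, add_zero] at e
  exact (mul_eq_zero.mp e).resolve_left hm

/-- A derivation has no entries `d_{ki}` between different twin classes. -/
theorem derivation_apply_eq_zero_of_support_ne
    (hd1 : ∀ i j k : ι, i ≠ j → ω j k * d i j + ω i k * d j i = 0)
    {i k : ι} (hki : k ≠ i) (hi : ∃ m, ω i m ≠ 0)
    (hsupp : {m | ω k m ≠ 0} ≠ {m | ω i m ≠ 0}) :
    d k i = 0 := by
  obtain ⟨m, hm⟩ : ∃ m, ¬(ω k m ≠ 0 ↔ ω i m ≠ 0) := by
    by_contra! h
    exact hsupp (Set.ext h)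
  by_cases hkm : ω k m = 0
  · have him : ω i m ≠ 0 := fun him => hm (iff_of_false (not_not.mpr hkm) (not_not.mpr him))
    exact derivation_apply_eq_zero_of_mul_eq_zero hd1 hki him (by rw [hkm, zero_mul])
  · have him : ω i m = 0 := by
      by_contra him
      exact hm (iff_of_true hkm him)
    have hdik : d i k = 0 :=
      derivation_apply_eq_zero_of_mul_eq_zero hd1 hki.symm hkm (by rw [him, zero_mul])
    obtain ⟨m', hm'⟩ := hi
    exact derivation_apply_eq_zero_of_mul_eq_zero hd1 hki hm' (by rw [hdik, mul_zero])

theorem derivation_diag_eq_zero_of_column_offDiag_eq_zero [Fintype ι]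
    (hd2 : ∀ i j : ι, ∑ k, ω i k * d k j = 2 * ω i j * d i i)
    {i : ι} (hcol : ∀ k, k ≠ i → d k i = 0) (hloop : ω i i ≠ 0) :
    d i i = 0 := by
  have hsum := hd2 i i
  rw [Finset.sum_eq_single_of_mem i (Finset.mem_univ i)
    (fun k _ hki => by rw [hcol k hki, mul_zero]), two_mul, add_mul] at hsum
  exact (mul_eq_zero.mp (left_eq_add.mp hsum)).resolve_left hloop

end

theorem derivation_singleton_class_loop_general {K : Type*} [Field K] {n : ℕ}
    (ω d : Matrix (Fin n) (Fin n) K)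
    (hd1 : ∀ i j k : Fin n, i ≠ j → ω j k * d i j + ω i k * d j i = 0)
    (hd2 : ∀ i j : Fin n, ∑ k, ω i k * d k j = 2 * ω i j * d i i)
    (i : Fin n)
    (hsingle : ∀ j : Fin n, {k | ω j k ≠ 0} = {k | ω i k ≠ 0} → j = i)
    (hloop : ω i i ≠ 0) :
    d i i = 0 :=
  derivation_diag_eq_zero_of_column_offDiag_eq_zero hd2
    (fun k hki => derivation_apply_eq_zero_of_support_ne hd1 hki ⟨i, hloop⟩
      (fun h => hki (hsingle k h)))
    hloop

/-- If the twin class of `i` is the singleton `{i}` and `i ∈ D¹(i)`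
(i.e. `ω_{ii} ≠ 0`), then `d_{ii} = 0`. -/
theorem derivation_singleton_class_loop {K : Type*} [Field K] [CharZero K] {n : ℕ}
    (ω d : Matrix (Fin n) (Fin n) K)
    (hnd : ∀ i : Fin n, ∃ k, ω i k ≠ 0)
    (hd1 : ∀ i j k : Fin n, i ≠ j → ω j k * d i j + ω i k * d j i = 0)
    (hd2 : ∀ i j : Fin n, ∑ k, ω i k * d k j = 2 * ω i j * d i i)
    (i : Fin n)
    (hsingle : ∀ j : Fin n, {k | ω j k ≠ 0} = {k | ω i k ≠ 0} → j = i)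
    (hloop : ω i i ≠ 0) :
    d i i = 0 :=
  derivation_singleton_class_loop_general ω d hd1 hd2 i hsingle hloop
end

section
/- Let A be a non-degenerate n-dimensional evolution algebra (char 0) with natural basis B, let T be a twin class relative to B with T^{wl} := {i ∈ T : ω_{ii} ≠ 0} nonempty, and let d be a derivation satisfying d_{ij} = 0 for all distinct i, j ∈ T^{wl}. Then d_{ii} = 0 for every i ∈ T. -/
/-!
Every non-twin entry `d k j` of a derivation vanishes. Fix a loop vertex `i₀` of `T`; then every
`i ∈ T` has `ω i i₀ ≠ 0`, and in the identity `∑ k, ω i k * d k i₀ = 2 * ω i i₀ * d i i` each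
`k ≠ i₀` with `ω i k ≠ 0` is either a non-twin of `i₀` or a loop vertex of `T`, so only `k = i₀`
survives. This gives `d i₀ i₀ = 2 * d i i` for all `i ∈ T`; taking `i = i₀` yields `d i₀ i₀ = 0`.
-/

open Function

namespace EvolutionAlgebra

variable {K ι : Type*} [Field K] {ω d : Matrix ι ι K}

lemma derivation_eq_zero_of_not_mem_support
    (hd1 : ∀ i j k, i ≠ j → ω j k * d i j + ω i k * d j i = 0) {i j k : ι} (hij : i ≠ j)
    (hik : k ∉ support (ω i)) (hjk : k ∈ support (ω j)) : d i j = 0 := by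
  have h := hd1 i j k hij
  rw [notMem_support.mp hik, zero_mul, add_zero] at h
  exact (mul_eq_zero.mp h).resolve_left hjk

lemma derivation_eq_zero_of_symm_eq_zero
    (hd1 : ∀ i j k, i ≠ j → ω j k * d i j + ω i k * d j i = 0) {i j k : ι} (hij : i ≠ j)
    (hji : d j i = 0) (hjk : ω j k ≠ 0) : d i j = 0 := by
  have h := hd1 i j k hij
  rw [hji, mul_zero, add_zero] at h
  exact (mul_eq_zero.mp h).resolve_left hjk

lemma derivation_eq_zero_of_support_ne (hnd : ∀ i, ∃ k, ω i k ≠ 0)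
    (hd1 : ∀ i j k, i ≠ j → ω j k * d i j + ω i k * d j i = 0) {i j : ι} (hij : i ≠ j)
    (hsupp : support (ω i) ≠ support (ω j)) : d i j = 0 := by
  obtain ⟨k, hk⟩ : ∃ k, ¬(k ∈ support (ω i) ↔ k ∈ support (ω j)) := by
    by_contra! h
    exact hsupp (Set.ext h)
  by_cases hik : k ∈ support (ω i)
  · have hjk : k ∉ support (ω j) := fun hjk => hk (iff_of_true hik hjk)
    obtain ⟨k', hk'⟩ := hnd j
    exact derivation_eq_zero_of_symm_eq_zero hd1 hij
      (derivation_eq_zero_of_not_mem_support hd1 hij.symm hjk hik) hk'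
  · exact derivation_eq_zero_of_not_mem_support hd1 hij hik (by tauto)

lemma diag_eq_two_mul_diag_of_support_eq [Fintype ι] [DecidableEq ι]
    (hd2 : ∀ i j, ∑ k, ω i k * d k j = 2 * ω i j * d i i) {i j : ι}
    (hsupp : support (ω i) = support (ω j)) (hj : ω j j ≠ 0)
    (hcol : ∀ k ∈ support (ω i), k ≠ j → d k j = 0) : d j j = 2 * d i i := by
  have hij : ω i j ≠ 0 := show j ∈ support (ω i) from hsupp ▸ hj
  have hsum : ∑ k, ω i k * d k j = ω i j * d j j := by
    refine Finset.sum_eq_single j (fun k _ hkj => ?_) (fun h => absurd (Finset.mem_univ j) h)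
    by_cases hik : ω i k = 0
    · rw [hik, zero_mul]
    · rw [hcol k hik hkj, mul_zero]
  refine mul_left_cancel₀ hij ?_
  linear_combination hsum.symm.trans (hd2 i j)

end EvolutionAlgebra

open EvolutionAlgebra

/-- Let `T` be the twin class of `t₀` with the loop part
`T^{wl} = {i ∈ T : ω_{ii} ≠ 0}` nonempty. If a derivation `d` satisfies
`d_{ij} = 0` for all distinct `i, j ∈ T^{wl}`, then `d_{ii} = 0` for all `i ∈ T`. -/
theorem derivation_loop_class_diag_zero {K : Type*} [Field K] [CharZero K] {n : ℕ}
    (ω d : Matrix (Fin n) (Fin n) K)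
    (hnd : ∀ i : Fin n, ∃ k, ω i k ≠ 0)
    (hd1 : ∀ i j k : Fin n, i ≠ j → ω j k * d i j + ω i k * d j i = 0)
    (hd2 : ∀ i j : Fin n, ∑ k, ω i k * d k j = 2 * ω i j * d i i)
    (t₀ : Fin n)
    (T : Set (Fin n)) (hT : T = {j | {k | ω j k ≠ 0} = {k | ω t₀ k ≠ 0}})
    (hwl : ∃ i ∈ T, ω i i ≠ 0)
    (hoff : ∀ i ∈ T, ∀ j ∈ T, ω i i ≠ 0 → ω j j ≠ 0 → i ≠ j → d i j = 0) :
    ∀ i ∈ T, d i i = 0 := by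
  subst hT
  obtain ⟨i₀, hi₀T, hi₀⟩ := hwl
  have hi₀supp : support (ω i₀) = support (ω t₀) := hi₀T
  have hcol : ∀ i ∈ {j | support (ω j) = support (ω t₀)},
      ∀ k ∈ support (ω i), k ≠ i₀ → d k i₀ = 0 := by
    intro i hi k hik hki₀
    by_cases hkT : support (ω k) = support (ω t₀)
    · have hkk : k ∈ support (ω k) := hkT ▸ hi ▸ hik
      exact hoff k hkT i₀ hi₀T hkk hi₀ hki₀
    · exact derivation_eq_zero_of_support_ne hnd hd1 hki₀ (hi₀supp ▸ hkT)
  have hdiag : ∀ i ∈ {j | support (ω j) = support (ω t₀)}, d i₀ i₀ = 2 * d i i :=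
    fun i hi => diag_eq_two_mul_diag_of_support_eq hd2 (hi.trans hi₀supp.symm) hi₀ (hcol i hi)
  have hi₀zero : d i₀ i₀ = 0 := by linear_combination -hdiag i₀ hi₀T
  intro i hi
  have h := hdiag i hi
  rw [hi₀zero] at h
  exact (mul_eq_zero.mp h.symm).resolve_left two_ne_zero
end

section
/- Let A be a non-degenerate evolution algebra (char 0) with natural basis B and structure matrix (ω_{ij}). Let T be a twin class with T^{wl} = ∅ (no ω_{ii} ≠ 0 for i ∈ T), let i ∈ T, and suppose all elements of D^1(i) lie in pairwise distinct twin classes. If d is a derivation with d_{jj} = 0 for some j ∈ D^1(i), then d_{ii} = 0 for every i ∈ T. -/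
/-- Let `T` be a twin class with no loops (`ω_{ii} = 0` for all `i ∈ T`), let
`i ∈ T` and suppose the elements of `D¹(i)` lie in pairwise distinct twin
classes. If a derivation satisfies `d_{jj} = 0` for some `j ∈ D¹(i)`, then
`d_{ii} = 0` for every `i ∈ T`. -/
theorem derivation_no_loop_class_diag_zero {K : Type*} [Field K] [CharZero K] {n : ℕ}
    (ω d : Matrix (Fin n) (Fin n) K)
    (hnd : ∀ i : Fin n, ∃ k, ω i k ≠ 0)
    (hd1 : ∀ i j k : Fin n, i ≠ j → ω j k * d i j + ω i k * d j i = 0)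
    (hd2 : ∀ i j : Fin n, ∑ k, ω i k * d k j = 2 * ω i j * d i i)
    (t₀ : Fin n)
    (T : Set (Fin n)) (hT : T = {j | {k | ω j k ≠ 0} = {k | ω t₀ k ≠ 0}})
    (hnl : ∀ i ∈ T, ω i i = 0)
    (i : Fin n) (hi : i ∈ T)
    (hdistinct : ∀ j₁ j₂ : Fin n, ω i j₁ ≠ 0 → ω i j₂ ≠ 0 → j₁ ≠ j₂ →
      {k | ω j₁ k ≠ 0} ≠ {k | ω j₂ k ≠ 0})
    (j : Fin n) (hj : ω i j ≠ 0) (hjj : d j j = 0) :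
    ∀ i' ∈ T, d i' i' = 0 := by
  -- Key: if a and b lie in different twin classes, then d a b = 0.
  have key : ∀ a b : Fin n, {m | ω a m ≠ 0} ≠ {m | ω b m ≠ 0} → d a b = 0 := by
    intro a b hab
    have hne : a ≠ b := by rintro rfl; exact hab rfl
    have hcase1 : ∀ m : Fin n, ω b m ≠ 0 → ω a m = 0 → d a b = 0 := by
      intro m hbm ham
      have h := hd1 a b m hne
      rw [ham, zero_mul, add_zero] at h
      exact (mul_eq_zero.mp h).resolve_left hbm
    have hm : ∃ m, (ω a m ≠ 0 ∧ ω b m = 0) ∨ (ω b m ≠ 0 ∧ ω a m = 0) := by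
      by_contra hcon
      push_neg at hcon
      apply hab
      ext m
      simp only [Set.mem_setOf_eq]
      constructor
      · intro ham
        exact (hcon m).1 ham
      · intro hbm
        exact (hcon m).2 hbm
    obtain ⟨m, hm⟩ := hm
    rcases hm with ⟨ham, hbm⟩ | ⟨hbm, ham⟩
    · -- first get d b a = 0
      have h := hd1 b a m hne.symm
      rw [hbm, zero_mul, add_zero] at h
      have hdba : d b a = 0 := (mul_eq_zero.mp h).resolve_left ham
      obtain ⟨p, hbp⟩ := hnd b
      by_cases hap : ω a p = 0
      · exact hcase1 p hbp hap
      · have h2 := hd1 a b p hne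
        rw [hdba, mul_zero, add_zero] at h2
        exact (mul_eq_zero.mp h2).resolve_left hbp
    · exact hcase1 m hbm ham
  intro i' hi'
  subst hT
  have heq : {k | ω i' k ≠ 0} = {k | ω i k ≠ 0} := hi'.trans hi.symm
  have hj' : ω i' j ≠ 0 := by
    have : j ∈ {k | ω i k ≠ 0} := hj
    rw [← heq] at this
    exact this
  have hsum := hd2 i' j
  have hz : ∀ k : Fin n, ω i' k * d k j = 0 := by
    intro k
    by_cases hk : ω i' k = 0
    · rw [hk, zero_mul]
    · have hik : ω i k ≠ 0 := by
        have : k ∈ {m | ω i' m ≠ 0} := hk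
        rw [heq] at this
        exact this
      by_cases hkj : k = j
      · subst hkj; rw [hjj, mul_zero]
      · rw [key k j (hdistinct k j hik hj hkj), mul_zero]
  rw [Finset.sum_congr rfl (fun k _ => hz k)] at hsum
  simp only [Finset.sum_const_zero] at hsum
  have h2 : (2 : K) ≠ 0 := two_ne_zero
  have := hsum.symm
  rcases mul_eq_zero.mp this with h | h
  · rcases mul_eq_zero.mp h with h' | h'
    · exact absurd h' h2
    · exact absurd h' hj'
  · exact h
end

section
/- Let A be an evolution algebra with natural basis B and structure matrix (ω_{ij}), and suppose there is a twin class T and an element i ∈ T such that D^1(j) = {i} for every j ∈ T. Then every derivation d satisfies d_{ij} = d_{ji} = d_{ii} = d_{jj} = 0 for every j ∈ T. -/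
/-!
The row of `ω` at every `j ∈ T` is supported on `{i}`, so the diagonal derivation identity
`∑ k, ω j k * d k p = 2 * ω j p * d j j` collapses to `ω j i * d i p = 2 * ω j p * d j j`.
At `(j, p) = (i, i)` this reads `ω i i * d i i = 2 * ω i i * d i i`, so `d i i = 0`;
at `(i, j)` it gives `ω i i * d i j = 0`; at `(j, i)` it gives `2 * ω j i * d j j = 0`.
Finally the cross identity at `(i, j, i)` reduces to `ω i i * d j i = 0`.
-/

namespace Matrix

variable {ι R : Type*} {ω : Matrix ι ι R} {i j : ι}

theorem apply_eq_zero_of_support_eq_singleton [Zero R] (h : {k | ω j k ≠ 0} = {i}) {k : ι}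
    (hk : k ≠ i) : ω j k = 0 := by
  by_contra hne
  exact hk (h.subset hne)

theorem apply_ne_zero_of_support_eq_singleton [Zero R] (h : {k | ω j k ≠ 0} = {i}) : ω j i ≠ 0 :=
  h.superset rfl

theorem sum_mul_eq_of_support_eq_singleton [Fintype ι] [NonUnitalNonAssocSemiring R]
    (h : {k | ω j k ≠ 0} = {i}) (v : ι → R) :
    ∑ k, ω j k * v k = ω j i * v i :=
  Finset.sum_eq_single i
    (fun _ _ hk => by rw [apply_eq_zero_of_support_eq_singleton h hk, zero_mul])
    (fun hi => absurd (Finset.mem_univ i) hi)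

end Matrix

/-- The coordinate form of `d (e_a e_b) = d e_a * e_b + e_a * d e_b` in an evolution algebra
with natural basis `e` and `e_a ^ 2 = ∑ k, ω a k • e_k`, where `d e_b = ∑ a, d a b • e_a`. -/
structure IsEvolutionDerivation {ι R : Type*} [Fintype ι] [CommRing R]
    (ω d : Matrix ι ι R) : Prop where
  cross : ∀ a b k, a ≠ b → ω b k * d a b + ω a k * d b a = 0
  diag : ∀ a b, ∑ k, ω a k * d k b = 2 * ω a b * d a a

namespace IsEvolutionDerivation

open Matrix

variable {ι R : Type*} [Fintype ι] [CommRing R] [IsDomain R] {ω d : Matrix ι ι R}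
  (hd : IsEvolutionDerivation ω d) {i j : ι}
include hd

theorem self_apply_eq_zero (hi : {k | ω i k ≠ 0} = {i}) : d i i = 0 := by
  have h := hd.diag i i
  rw [sum_mul_eq_of_support_eq_singleton hi] at h
  have h0 : ω i i * d i i = 0 := by linear_combination -h
  exact (mul_eq_zero.mp h0).resolve_left (apply_ne_zero_of_support_eq_singleton hi)

theorem row_apply_eq_zero (hi : {k | ω i k ≠ 0} = {i}) (j : ι) : d i j = 0 := by
  have h := hd.diag i j
  rw [sum_mul_eq_of_support_eq_singleton hi, hd.self_apply_eq_zero hi, mul_zero] at h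
  exact (mul_eq_zero.mp h).resolve_left (apply_ne_zero_of_support_eq_singleton hi)

theorem col_apply_eq_zero (hi : {k | ω i k ≠ 0} = {i}) (j : ι) : d j i = 0 := by
  rcases eq_or_ne j i with rfl | hji
  · exact hd.self_apply_eq_zero hi
  have h := hd.cross i j i hji.symm
  rw [hd.row_apply_eq_zero hi, mul_zero, zero_add] at h
  exact (mul_eq_zero.mp h).resolve_left (apply_ne_zero_of_support_eq_singleton hi)

theorem diag_eq_zero_of_support_eq_singleton [NeZero (2 : R)] (hi : {k | ω i k ≠ 0} = {i})
    (hj : {k | ω j k ≠ 0} = {i}) : d j j = 0 := by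
  have h := hd.diag j i
  rw [sum_mul_eq_of_support_eq_singleton hj, hd.self_apply_eq_zero hi, mul_zero, eq_comm] at h
  simpa [NeZero.ne, apply_ne_zero_of_support_eq_singleton hj] using h

end IsEvolutionDerivation

theorem derivation_class_single_descendant_general {K : Type*} [Field K] [CharZero K] {n : ℕ}
    (ω d : Matrix (Fin n) (Fin n) K)
    (hd1 : ∀ i j k : Fin n, i ≠ j → ω j k * d i j + ω i k * d j i = 0)
    (hd2 : ∀ i j : Fin n, ∑ k, ω i k * d k j = 2 * ω i j * d i i)
    (i : Fin n)
    (T : Set (Fin n))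
    (hi : i ∈ T)
    (hdesc : ∀ j ∈ T, {k | ω j k ≠ 0} = {i}) :
    ∀ j ∈ T, d i j = 0 ∧ d j i = 0 ∧ d i i = 0 ∧ d j j = 0 := by
  intro j hj
  have hd : IsEvolutionDerivation ω d := ⟨hd1, hd2⟩
  have hii := hdesc i hi
  exact ⟨hd.row_apply_eq_zero hii j, hd.col_apply_eq_zero hii j, hd.self_apply_eq_zero hii,
    hd.diag_eq_zero_of_support_eq_singleton hii (hdesc j hj)⟩

/-- If `T` is a twin class and `i ∈ T` satisfies `D¹(j) = {i}` for every
`j ∈ T`, then every derivation satisfies `d_{ij} = d_{ji} = d_{ii} = d_{jj} = 0`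
for every `j ∈ T`. -/
theorem derivation_class_single_descendant {K : Type*} [Field K] [CharZero K] {n : ℕ}
    (ω d : Matrix (Fin n) (Fin n) K)
    (hd1 : ∀ i j k : Fin n, i ≠ j → ω j k * d i j + ω i k * d j i = 0)
    (hd2 : ∀ i j : Fin n, ∑ k, ω i k * d k j = 2 * ω i j * d i i)
    (i : Fin n)
    (T : Set (Fin n)) (hT : T = {j | {k | ω j k ≠ 0} = {k | ω i k ≠ 0}})
    (hi : i ∈ T)
    (hdesc : ∀ j ∈ T, {k | ω j k ≠ 0} = {i}) :
    ∀ j ∈ T, d i j = 0 ∧ d j i = 0 ∧ d i i = 0 ∧ d j j = 0 :=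
  derivation_class_single_descendant_general ω d hd1 hd2 i T hi hdesc
end
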